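/- Let G be a finite graph with vertex set V and let H be a symmetric invertible graph-structured block matrix (H_{ij} = 0 when d(i,j) > 1) whose singular values lie in [σ̲, σ̄] with 0 < σ̲ ≤ σ̄. Then for all i, j ∈ V, the block (H⁻¹)_{ij} satisfies ‖(H⁻¹)_{ij}‖ ≤ (σ̄/σ̲²) · ρ^{⌈(d(i,j)−1)/2⌉} where ρ = (σ̄² − σ̲²)/(σ̄² + σ̲²) and ‖·‖ is the operator 2-norm. -/

import Mathlib

/-!
Write `c = 2 / (σhi² + σlo²)` and `B = 1 - c H²`. Since `σlo² ≤ H² ≤ σhi²`, the spectrum of the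
symmetric matrix `B` lies in `[-ρ, ρ]`, so `‖B‖ ≤ ρ < 1` and `H⁻¹ = c H (1 - B)⁻¹` is the sum of
the series `c H B^q`. The term `H B^q` is a product of `2q + 1` factors, each coupling only
vertices at distance at most one, so its `(i, j)` block vanishes whenever `2q + 1 < d(i, j)`, in
particular for `q < q₀ = ⌈(d(i, j) - 1) / 2⌉`. What is left of the block of `H⁻¹` is bounded by
the geometric tail `c σhi Σ_{q ≥ q₀} ρ^q = (σhi / σlo²) ρ^q₀`.
-/

open scoped Matrix.Norms.L2Operator MatrixOrder

section SpectralBounds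
variable {A : Type*} [NormedRing A] [StarRing A] [NormedAlgebra ℝ A]
  [IsometricContinuousFunctionalCalculus ℝ A IsSelfAdjoint] [PartialOrder A] [StarOrderedRing A]
  [NonnegSpectrumClass ℝ A]

lemma IsSelfAdjoint.norm_le_of_neg_le_of_le {a : A} (ha : IsSelfAdjoint a) {r : ℝ} (hr : 0 ≤ r)
    (hlo : -algebraMap ℝ A r ≤ a) (hhi : a ≤ algebraMap ℝ A r) : ‖a‖ ≤ r := by
  rw [← map_neg] at hlo
  rw [← cfc_id' ℝ a]
  refine norm_cfc_le hr fun x hx => abs_le.mpr ⟨?_, ?_⟩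
  · exact (algebraMap_le_iff_le_spectrum ha).mp hlo x hx
  · exact (le_algebraMap_iff_spectrum_le ha).mp hhi x hx

lemma IsSelfAdjoint.norm_le_of_sq_le [StarModule ℝ A] [CStarRing A] {a : A}
    (ha : IsSelfAdjoint a) {r : ℝ} (hr : 0 ≤ r) (h : a ^ 2 ≤ algebraMap ℝ A (r ^ 2)) : ‖a‖ ≤ r := by
  have hsq : ‖a ^ 2‖ ≤ r ^ 2 := by
    refine (ha.pow 2).norm_le_of_neg_le_of_le (sq_nonneg r) ?_ h
    have hr2 : 0 ≤ algebraMap ℝ A (r ^ 2) := by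
      rw [map_pow]
      exact (IsSelfAdjoint.algebraMap A (IsSelfAdjoint.all r)).sq_nonneg
    exact (neg_nonpos.mpr hr2).trans ha.sq_nonneg
  have hnorm : ‖a ^ 2‖ = ‖a‖ ^ 2 := by
    rw [sq, sq, ← CStarRing.norm_star_mul_self, ha.star_eq]
  rw [hnorm] at hsq
  exact (pow_le_pow_iff_left₀ (norm_nonneg a) hr two_ne_zero).mp hsq

lemma IsSelfAdjoint.norm_one_sub_smul_le [StarModule ℝ A] {b : A} (hb : IsSelfAdjoint b)
    {m M : ℝ} (hm : 0 < m) (hmM : m ≤ M) (hlo : algebraMap ℝ A m ≤ b) (hhi : b ≤ algebraMap ℝ A M) :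
    ‖1 - (2 / (M + m)) • b‖ ≤ (M - m) / (M + m) := by
  have hMm : 0 < M + m := by linarith
  have hc : 0 ≤ 2 / (M + m) := by positivity
  refine ((IsSelfAdjoint.one A).sub ((IsSelfAdjoint.all _).smul hb)).norm_le_of_neg_le_of_le
    (div_nonneg (by linarith) hMm.le) ?_ ?_
  · have hρ : (M - m) / (M + m) = 2 / (M + m) * M - 1 := by field_simp; ring
    rw [hρ, map_sub, map_one, map_mul, ← Algebra.smul_def, neg_sub]
    exact sub_le_sub_left (smul_le_smul_of_nonneg_left hhi hc) 1
  · have hρ : (M - m) / (M + m) = 1 - 2 / (M + m) * m := by field_simp; ring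
    rw [hρ, map_sub, map_one, map_mul, ← Algebra.smul_def]
    exact sub_le_sub_left (smul_le_smul_of_nonneg_left hlo hc) 1

end SpectralBounds

lemma norm_mul_pow_le {R : Type*} [SeminormedRing R] (a b : R) (q : ℕ) :
    ‖a * b ^ q‖ ≤ ‖a‖ * ‖b‖ ^ q := by
  induction q with
  | zero => simp
  | succ q ih =>
    rw [pow_succ, ← mul_assoc, pow_succ, ← mul_assoc]
    exact (norm_mul_le _ _).trans (by gcongr)

def neumannTerm {S A : Type*} [Ring A] [SMul S A] (c : S) (a : A) (q : ℕ) : A :=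
  c • (a * (1 - c • a ^ 2) ^ q)

section NeumannSeries
variable {A : Type*} [NormedRing A] [NormedAlgebra ℝ A]

lemma hasSum_neumannTerm [HasSummableGeomSeries A] {a b : A} (hba : b * a = 1) {c : ℝ}
    (h : ‖1 - c • a ^ 2‖ < 1) : HasSum (neumannTerm c a) b := by
  set x := 1 - c • a ^ 2
  have hb : b = c • (a * ∑' q, x ^ q) :=
    calc b = b * ((1 - x) * ∑' q, x ^ q) := by rw [mul_neg_geom_series x h, mul_one]
      _ = c • (b * a * (a * ∑' q, x ^ q)) := by
        rw [sub_sub_cancel, sq, smul_mul_assoc, mul_smul_comm]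
        noncomm_ring
      _ = c • (a * ∑' q, x ^ q) := by rw [hba, one_mul]
  rw [hb]
  exact ((summable_geometric_of_norm_lt_one h).hasSum.mul_left a).const_smul c

lemma norm_neumannTerm_le {c : ℝ} (hc : 0 ≤ c) (a : A) (q : ℕ) :
    ‖neumannTerm c a q‖ ≤ c * ‖a‖ * ‖1 - c • a ^ 2‖ ^ q := by
  rw [neumannTerm, norm_smul, Real.norm_of_nonneg hc, mul_assoc]
  gcongr
  exact norm_mul_pow_le _ _ q

end NeumannSeries

lemma HasSum.matrix_submatrix {X l m n p R : Type*} [AddCommMonoid R] [TopologicalSpace R]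
    {f : X → Matrix m n R} {a : Matrix m n R} (hf : HasSum f a) (e₁ : l → m) (e₂ : p → n) :
    HasSum (fun x => (f x).submatrix e₁ e₂) (a.submatrix e₁ e₂) :=
  hf.map (⟨⟨fun M => M.submatrix e₁ e₂, rfl⟩, fun _ _ => rfl⟩ : Matrix m n R →+ Matrix l p R)
    (continuous_id.matrix_submatrix e₁ e₂)

lemma HasSum.norm_le_of_eq_zero_of_norm_le_geometric {E : Type*} [SeminormedAddCommGroup E]
    {f : ℕ → E} {s : E} (hf : HasSum f s) {k : ℕ} (hzero : ∀ q < k, f q = 0) {C ρ : ℝ}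
    (hρ0 : 0 ≤ ρ) (hρ1 : ρ < 1) (hle : ∀ q, ‖f q‖ ≤ C * ρ ^ q) :
    ‖s‖ ≤ C / (1 - ρ) * ρ ^ k := by
  have htail : HasSum (fun q => f (q + k)) s := by
    simpa [Finset.sum_eq_zero fun q hq => hzero q (Finset.mem_range.mp hq)]
      using (hasSum_nat_add_iff' k).mpr hf
  rw [div_mul_eq_mul_div]
  refine htail.norm_le_of_bounded ((hasSum_geometric_of_lt_one hρ0 hρ1).mul_left (C * ρ ^ k))
    fun q => ?_
  simpa [pow_add, mul_comm, mul_left_comm, mul_assoc] using hle (q + k)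

namespace Matrix

section L2OpNorm

variable {m n ι κ 𝕜 : Type*} [Fintype m] [Fintype n] [Fintype ι] [Fintype κ] [RCLike 𝕜]

lemma l2_opNorm_one_le [DecidableEq n] : ‖(1 : Matrix n n 𝕜)‖ ≤ 1 := by
  rw [← diagonal_one, l2_opNorm_diagonal]
  exact (pi_norm_le_iff_of_nonneg zero_le_one).mpr fun _ => by simp

lemma l2_opNorm_one_submatrix_le [DecidableEq n] [DecidableEq κ] {e : n → κ}
    (he : Function.Injective e) : ‖(1 : Matrix κ κ 𝕜).submatrix id e‖ ≤ 1 := by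
  set P := (1 : Matrix κ κ 𝕜).submatrix id e
  have hP : Pᴴ * P = 1 := by
    ext i j
    simp [P, mul_apply, one_apply, he.eq_iff]
  have hsq : ‖P‖ * ‖P‖ ≤ 1 := by
    rw [← l2_opNorm_conjTranspose_mul_self, hP]
    exact l2_opNorm_one_le
  nlinarith [norm_nonneg P]

lemma l2_opNorm_submatrix_le [DecidableEq m] [DecidableEq n] [DecidableEq ι] [DecidableEq κ]
    (M : Matrix ι κ 𝕜) {e₁ : m → ι} {e₂ : n → κ} (he₁ : Function.Injective e₁)
    (he₂ : Function.Injective e₂) : ‖M.submatrix e₁ e₂‖ ≤ ‖M‖ := by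
  set P₁ := (1 : Matrix ι ι 𝕜).submatrix id e₁
  set P₂ := (1 : Matrix κ κ 𝕜).submatrix id e₂
  have hfac : M.submatrix e₁ e₂ = P₁ᴴ * M * P₂ := by
    ext i j
    simp [P₁, P₂, mul_apply, one_apply]
  calc ‖M.submatrix e₁ e₂‖ ≤ ‖P₁ᴴ‖ * ‖M‖ * ‖P₂‖ := by
        rw [hfac]
        exact (l2_opNorm_mul _ _).trans (by gcongr; exact l2_opNorm_mul _ _)
    _ ≤ 1 * ‖M‖ * 1 := by
        rw [l2_opNorm_conjTranspose]
        gcongr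
        exacts [l2_opNorm_one_submatrix_le he₁, l2_opNorm_one_submatrix_le he₂]
    _ = ‖M‖ := by ring

end L2OpNorm

section GraphBanded

variable {ι V R : Type*} (G : SimpleGraph V) (π : ι → V)

def IsGraphBanded [Zero R] (r : ℕ) (M : Matrix ι ι R) : Prop :=
  ∀ a b, (r : ℕ∞) < G.edist (π a) (π b) → M a b = 0

variable {G π}

lemma IsGraphBanded.mono [Zero R] {r s : ℕ} {M : Matrix ι ι R} (hM : IsGraphBanded G π r M)
    (hrs : r ≤ s) : IsGraphBanded G π s M :=
  fun a b hab => hM a b (lt_of_le_of_lt (by exact_mod_cast hrs) hab)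

lemma isGraphBanded_one [DecidableEq ι] [Zero R] [One R] :
    IsGraphBanded G π 0 (1 : Matrix ι ι R) := by
  intro a b hab
  refine one_apply_ne fun h => ?_
  simp [h] at hab

lemma isGraphBanded_one_of_adj [Zero R] {M : Matrix ι ι R}
    (hM : ∀ a b, π a ≠ π b → ¬ G.Adj (π a) (π b) → M a b = 0) : IsGraphBanded G π 1 M := by
  intro a b hab
  refine hM a b (fun h => ?_) (fun h => ?_)
  · simp [h] at hab
  · simp [SimpleGraph.edist_eq_one_iff_adj.mpr h] at hab

lemma IsGraphBanded.mul [Fintype ι] [NonUnitalNonAssocSemiring R] {r s : ℕ}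
    {M N : Matrix ι ι R} (hM : IsGraphBanded G π r M) (hN : IsGraphBanded G π s N) :
    IsGraphBanded G π (r + s) (M * N) := by
  intro a b hab
  rw [mul_apply]
  refine Finset.sum_eq_zero fun k _ => ?_
  by_cases hak : (r : ℕ∞) < G.edist (π a) (π k)
  · rw [hM a k hak, zero_mul]
  by_cases hkb : (s : ℕ∞) < G.edist (π k) (π b)
  · rw [hN k b hkb, mul_zero]
  refine absurd (G.edist_triangle.trans (add_le_add (not_lt.mp hak) (not_lt.mp hkb))) ?_
  exact_mod_cast hab.not_ge

lemma IsGraphBanded.pow [Fintype ι] [DecidableEq ι] [Semiring R] {r : ℕ} {M : Matrix ι ι R}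
    (hM : IsGraphBanded G π r M) (q : ℕ) : IsGraphBanded G π (r * q) (M ^ q) := by
  induction q with
  | zero => exact isGraphBanded_one
  | succ q ih => simpa [pow_succ, mul_add] using ih.mul hM

lemma IsGraphBanded.sub [AddGroup R] {r : ℕ} {M N : Matrix ι ι R} (hM : IsGraphBanded G π r M)
    (hN : IsGraphBanded G π r N) : IsGraphBanded G π r (M - N) :=
  fun a b hab => by rw [sub_apply, hM a b hab, hN a b hab, sub_zero]

lemma IsGraphBanded.smul {S : Type*} [Zero R] [SMulZeroClass S R] {r : ℕ} {M : Matrix ι ι R}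
    (hM : IsGraphBanded G π r M) (c : S) : IsGraphBanded G π r (c • M) :=
  fun a b hab => by rw [smul_apply, hM a b hab, smul_zero]

lemma IsGraphBanded.neumannTerm [Fintype ι] [DecidableEq ι] {S : Type*} [Ring R]
    [SMulZeroClass S R] {M : Matrix ι ι R} (hM : IsGraphBanded G π 1 M) (c : S) (q : ℕ) :
    IsGraphBanded G π (2 * q + 1) (neumannTerm c M q) := by
  have hB : IsGraphBanded G π 2 (1 - c • M ^ 2) :=
    (isGraphBanded_one.mono (Nat.zero_le 2)).sub ((hM.pow 2).smul c)
  rw [add_comm]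
  exact (hM.mul (hB.pow q)).smul c

lemma IsGraphBanded.submatrix_sigmaMk_eq_zero {κ : V → Type*} [Zero R] {r : ℕ}
    {M : Matrix (Σ v, κ v) (Σ v, κ v) R} (hM : IsGraphBanded G Sigma.fst r M) {i j : V}
    (hij : (r : ℕ∞) < G.edist i j) : M.submatrix (Sigma.mk i) (Sigma.mk j) = 0 :=
  ext fun p q => hM ⟨i, p⟩ ⟨j, q⟩ hij

end GraphBanded

end Matrix

lemma two_mul_add_one_lt_of_lt_toNat_ceil {q D : ℕ} (hq : q < ⌈((D : ℝ) - 1) / 2⌉.toNat) :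
    2 * q + 1 < D := by
  have : (q : ℝ) < ((D : ℝ) - 1) / 2 := Int.lt_ceil.mp (Int.lt_toNat.mp hq)
  have : (2 * q + 1 : ℝ) < D := by linarith
  exact_mod_cast this

open Matrix

/-- Exponential decay of the blocks of the inverse of a symmetric invertible
graph-structured block matrix: if the `(i,j)` block of `H` vanishes for non-adjacent
`i ≠ j` and the singular values of `H` lie in `[σlo, σhi]`
(expressed via `σlo² I ⪯ H² ⪯ σhi² I`), then the `(i,j)` block of `H⁻¹` has operator
2-norm at most `(σhi/σlo²) ρ^⌈(d(i,j)−1)/2⌉` with `ρ = (σhi²−σlo²)/(σhi²+σlo²)`. -/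
theorem blocks_of_inverse_exponential_decay
    {V : Type*} [Fintype V] [DecidableEq V] (G : SimpleGraph V)
    (n : V → ℕ) (H : Matrix (Σ i : V, Fin (n i)) (Σ i : V, Fin (n i)) ℝ)
    (hH : ∀ a b : Σ i : V, Fin (n i), a.1 ≠ b.1 → ¬ G.Adj a.1 b.1 → H a b = 0)
    (hsymm : H.IsSymm) (hinv : IsUnit H)
    (σlo σhi : ℝ) (hσ0 : 0 < σlo) (hσ : σlo ≤ σhi)
    (hlow : (H ^ 2 - σlo ^ 2 • (1 : Matrix _ _ ℝ)).PosSemidef)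
    (hupp : (σhi ^ 2 • (1 : Matrix _ _ ℝ) - H ^ 2).PosSemidef) :
    ∀ i j : V, ∀ D : ℕ, (D : ℕ∞) ≤ G.edist i j →
      ‖Matrix.of (fun (p : Fin (n i)) (r : Fin (n j)) => H⁻¹ ⟨i, p⟩ ⟨j, r⟩)‖ ≤
        (σhi / σlo ^ 2) *
          ((σhi ^ 2 - σlo ^ 2) / (σhi ^ 2 + σlo ^ 2)) ^ (⌈((D : ℝ) - 1) / 2⌉.toNat) := by
  intro i j D hD
  set c := 2 / (σhi ^ 2 + σlo ^ 2)
  set ρ := (σhi ^ 2 - σlo ^ 2) / (σhi ^ 2 + σlo ^ 2)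
  have hσhi : 0 ≤ σhi := hσ0.le.trans hσ
  have hHsa : IsSelfAdjoint H := (isHermitian_iff_isSymm.mpr hsymm).isSelfAdjoint
  have hlow' : algebraMap ℝ _ (σlo ^ 2) ≤ H ^ 2 := by rwa [Algebra.algebraMap_eq_smul_one, le_iff]
  have hupp' : H ^ 2 ≤ algebraMap ℝ _ (σhi ^ 2) := by rwa [Algebra.algebraMap_eq_smul_one, le_iff]
  have hHnorm : ‖H‖ ≤ σhi := hHsa.norm_le_of_sq_le hσhi hupp'
  have hBnorm : ‖1 - c • H ^ 2‖ ≤ ρ :=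
    (hHsa.pow 2).norm_one_sub_smul_le (by positivity) (by gcongr) hlow' hupp'
  have hρ1 : ρ < 1 := by
    rw [div_lt_one (by positivity)]
    linarith [pow_pos hσ0 2]
  have hseries := hasSum_neumannTerm
    (nonsing_inv_mul H ((isUnit_iff_isUnit_det H).mp hinv)) (hBnorm.trans_lt hρ1)
  have hvanish : ∀ q < ⌈((D : ℝ) - 1) / 2⌉.toNat,
      (neumannTerm c H q).submatrix (Sigma.mk i) (Sigma.mk j) = 0 := fun q hq =>
    ((isGraphBanded_one_of_adj hH).neumannTerm c q).submatrix_sigmaMk_eq_zero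
      ((Nat.cast_lt.mpr (two_mul_add_one_lt_of_lt_toNat_ceil hq)).trans_le hD)
  have hterm (q : ℕ) :
      ‖(neumannTerm c H q).submatrix (Sigma.mk i) (Sigma.mk j)‖ ≤ c * σhi * ρ ^ q :=
    (l2_opNorm_submatrix_le _ sigma_mk_injective sigma_mk_injective).trans
      ((norm_neumannTerm_le (by positivity) H q).trans (by gcongr))
  have hconst : c * σhi / (1 - ρ) = σhi / σlo ^ 2 := by
    simp only [c, ρ]
    field_simp
    ring
  -- The block `Matrix.of fun p r => H⁻¹ ⟨i, p⟩ ⟨j, r⟩` is `H⁻¹.submatrix (Sigma.mk i) (Sigma.mk j)`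
  -- by definition, so `hblock` closes the goal up to `hconst`.
  have hblock := HasSum.norm_le_of_eq_zero_of_norm_le_geometric
    (hseries.matrix_submatrix (Sigma.mk i) (Sigma.mk j)) hvanish ((norm_nonneg _).trans hBnorm)
    hρ1 hterm
  rwa [hconst] at hblock
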